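/- Let Q be a countable quasi-order that is thick. Then for every binary relation Φ ⊆ Q², at least one of Q equipped with (≤ ∪ Φ) and Q equipped with (≤ ∪ (Q² ∖ Φ)) is thick. -/

import Mathlib

/-- The shift map on sequences. -/
def seqShift {Q : Type*} (X : ℕ → Q) : ℕ → Q := fun k => X (k + 1)

/-- The set `Q⃗` of sequences `X` with `¬ r (X k) (X (k+1))` for all `k`. -/
def vecSet {Q : Type*} (r : Q → Q → Prop) : Set (ℕ → Q) :=
  {X | ∀ k, ¬ r (X k) (X (k + 1))}

/-- The shift graph on a subset `A` of `Qᴺ` (with `Q` discrete, `Qᴺ` carrying the product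
Borel structure) admits a Borel proper 3-colouring. -/
def Colour3 {Q : Type*} (A : Set (ℕ → Q)) : Prop :=
  letI : MeasurableSpace Q := ⊤
  ∃ c : A → Fin 3, Measurable c ∧
    ∀ (X : ℕ → Q) (hX : X ∈ A) (hX' : seqShift X ∈ A),
      c ⟨X, hX⟩ ≠ c ⟨seqShift X, hX'⟩

/-- A relation `r` on `Q` is *thin* if the shift graph on `Q⃗ = vecSet r`
is Borel 3-colourable; otherwise it is *thick*. -/
def IsThin {Q : Type*} (r : Q → Q → Prop) : Prop := Colour3 (vecSet r)

/-!
Suppose `r ∨ Φ` and `r ∨ ¬Φ` are both thin. A sequence in `vecSet r` either has no edge of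
type `Φ` (it lies in `vecSet (r ∨ Φ)`), or only edges of type `Φ` (it lies in
`vecSet (r ∨ ¬Φ)`), or it changes edge type. The first two sets are shift-invariant and carry
the given Borel 3-colourings; on the rest, the type of the first edge together with the parity
of the first change of type is a proper colouring. Gluing gives a Borel proper colouring of
`vecSet r` with finitely many colours, and such a colouring reduces to three colours: the points
whose colour is the least one recurring infinitely often along their orbit form a Borel
independent set that every orbit meets, and colouring by the parity of the time needed to reach
this set, with a third colour on the set itself, is proper.
-/

open Filter Set

instance Sum.instMeasurableSingletonClass {ι κ : Type*} [MeasurableSpace ι] [MeasurableSpace κ]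
    [MeasurableSingletonClass ι] [MeasurableSingletonClass κ] :
    MeasurableSingletonClass (ι ⊕ κ) where
  measurableSet_singleton
    | .inl a => by rw [← image_singleton]; exact (measurableSet_singleton a).inl_image
    | .inr b => by rw [← image_singleton]; exact (measurableSet_singleton b).inr_image

theorem measurable_nat_sInf {α : Type*} [MeasurableSpace α] {p : α → ℕ → Prop}
    (hp : ∀ k, Measurable fun x => p x k) : Measurable fun x => sInf {k | p x k} := by
  classical
  -- `sInf ∅ = 0` in `ℕ`, so `sInf` is `Nat.find` of `p` with the empty case admitted at `0`
  have hq : ∀ x, ∃ k, p x k ∨ ∀ j, ¬ p x j := fun x => by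
    by_cases h : ∃ k, p x k
    · exact h.imp fun _ => Or.inl
    · exact ⟨0, Or.inr (not_exists.1 h)⟩
  convert measurable_find hq fun k => measurableSet_setOfPred.2 <|
    (hp k).or (Measurable.forall fun j => (hp j).not) using 2 with x
  rw [eq_comm, Nat.find_eq_iff]
  by_cases h : ∃ k, p x k
  · exact ⟨Or.inl (Nat.sInf_mem h), fun n hn hpn =>
      hpn.elim (Nat.notMem_of_lt_sInf hn) fun hnp => hnp _ (Nat.sInf_mem h)⟩
  · simp [not_exists.1 h]

theorem measurable_seqShift {β : Type*} [MeasurableSpace β] :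
    Measurable (seqShift : (ℕ → β) → ℕ → β) :=
  measurable_pi_lambda _ fun k => measurable_pi_apply (k + 1)

section Colouring

variable {α ι κ : Type*} {T : α → α} {A : Set α}

def IsProperColouringOn (T : α → α) (A : Set α) (c : α → ι) : Prop :=
  ∀ x ∈ A, c x ≠ c (T x)

variable {n : ℕ}

theorem exists_frequently_iterate_eq (T : α → α) (c : α → Fin n) (x : α) :
    ∃ j : ℕ, ∃ᶠ m in atTop, (c (T^[m] x) : ℕ) = j := by
  obtain ⟨j, hj⟩ := Finite.exists_infinite_fiber fun m => c (T^[m] x)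
  refine ⟨j, Nat.frequently_atTop_iff_infinite.2 ?_⟩
  simpa [Fin.val_inj, preimage] using infinite_coe_iff.1 hj

open Classical in
noncomputable def leastRecurrentColour (T : α → α) (c : α → Fin n) (x : α) : ℕ :=
  Nat.find (exists_frequently_iterate_eq T c x)

open Classical in
theorem frequently_iterate_eq_leastRecurrentColour (T : α → α) (c : α → Fin n) (x : α) :
    ∃ᶠ m in atTop, (c (T^[m] x) : ℕ) = leastRecurrentColour T c x :=
  Nat.find_spec (exists_frequently_iterate_eq T c x)

open Classical in
theorem leastRecurrentColour_apply (T : α → α) (c : α → Fin n) (x : α) :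
    leastRecurrentColour T c (T x) = leastRecurrentColour T c x :=
  Nat.find_congr' fun {j} =>
    (frequently_map (m := fun a => a + 1) (P := fun m => (c (T^[m] x) : ℕ) = j)).symm.trans
      (by rw [map_add_atTop_eq_nat])

theorem leastRecurrentColour_iterate (T : α → α) (c : α → Fin n) (m : ℕ) (x : α) :
    leastRecurrentColour T c (T^[m] x) = leastRecurrentColour T c x := by
  induction m with
  | zero => rfl
  | succ m ih => rw [Function.iterate_succ_apply', leastRecurrentColour_apply, ih]

variable [MeasurableSpace α]

theorem exists_measurable_fin_three_of_hitting (hT : Measurable T) {B : Set α}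
    (hB : MeasurableSet B) (hhit : ∀ x, ∃ m, T^[m] x ∈ B) (hBA : ∀ x ∈ A, x ∈ B → T x ∉ B) :
    ∃ d : α → Fin 3, Measurable d ∧ IsProperColouringOn T A d := by
  classical
  let N x := Nat.find (hhit x)
  let g : ℕ → Fin 3 := fun m => if m = 0 then 0 else if m % 2 = 0 then 1 else 2
  have hg : ∀ m, g (m + 1) ≠ g m := by
    intro m
    simp only [g]
    split_ifs <;> first | decide | (exfalso; omega)
  refine ⟨g ∘ N, measurable_from_nat.comp (measurable_find hhit fun k => hT.iterate k hB),
    fun x hxA => ?_⟩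
  by_cases hx : x ∈ B
  · have hNx : N x = 0 := Nat.find_eq_zero _ |>.2 hx
    have hNTx : N (T x) ≠ 0 := fun h => hBA x hxA hx (Nat.find_eq_zero _ |>.1 h)
    simp only [Function.comp_apply, g, hNx, hNTx, if_true, if_false]
    split_ifs <;> decide
  · have hN : N x = N (T x) + 1 := Nat.find_comp_succ _ _ hx
    simpa [hN] using hg (N (T x))

theorem measurable_leastRecurrentColour (hT : Measurable T) {c : α → Fin n}
    (hc : Measurable c) : Measurable (leastRecurrentColour T c) := by
  classical
  refine measurable_find _ fun j => measurableSet_setOfPred.2 ?_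
  simp only [frequently_atTop]
  exact Measurable.forall fun a => Measurable.exists fun b => measurable_const.and <|
    (measurable_from_top.comp (hc.comp (hT.iterate b))).eq_const j

theorem exists_measurable_fin_three_of_fin (hT : Measurable T) {c : α → Fin n}
    (hc : Measurable c) (hcA : IsProperColouringOn T A c) :
    ∃ d : α → Fin 3, Measurable d ∧ IsProperColouringOn T A d := by
  refine exists_measurable_fin_three_of_hitting hT
    (B := {x | (c x : ℕ) = leastRecurrentColour T c x})
    (measurableSet_eq_fun (measurable_from_top.comp hc) (measurable_leastRecurrentColour hT hc))
    (fun x => ?_) fun x hxA hx hTx => hcA x hxA (Fin.ext ?_)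
  · obtain ⟨m, hm⟩ := (frequently_iterate_eq_leastRecurrentColour T c x).exists
    exact ⟨m, by simp [hm, leastRecurrentColour_iterate]⟩
  · simp only [mem_ofPred_eq] at hx hTx
    rw [hx, hTx, leastRecurrentColour_apply]

theorem exists_measurable_fin_three_of_finite [Finite ι] [MeasurableSpace ι]
    [MeasurableSingletonClass ι] (hT : Measurable T) {c : α → ι} (hc : Measurable c)
    (hcA : IsProperColouringOn T A c) :
    ∃ d : α → Fin 3, Measurable d ∧ IsProperColouringOn T A d :=
  exists_measurable_fin_three_of_fin hT ((measurable_of_finite (Finite.equivFin ι)).comp hc)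
    fun x hx => (Finite.equivFin ι).injective.ne (hcA x hx)

theorem exists_measurable_sum_of_mapsTo [MeasurableSpace ι] [MeasurableSpace κ] {B : Set α}
    (hB : MeasurableSet B) (hTB : MapsTo T B B) {c : B → ι} (hc : Measurable c)
    (hcB : ∀ x (hx : x ∈ B), c ⟨x, hx⟩ ≠ c ⟨T x, hTB hx⟩) {d : α → κ} (hd : Measurable d)
    (hdA : ∀ x ∈ A, x ∉ B → T x ∉ B → d x ≠ d (T x)) :
    ∃ e : α → ι ⊕ κ, Measurable e ∧ IsProperColouringOn T A e := by
  classical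
  refine ⟨fun x => if hx : x ∈ B then .inl (c ⟨x, hx⟩) else .inr (d x),
    (measurable_inl.comp hc).dite (measurable_inr.comp (hd.comp measurable_subtype_coe)) hB,
    fun x hxA => ?_⟩
  by_cases hx : x ∈ B
  · simpa [hx, hTB hx] using hcB x hx
  · by_cases hTx : T x ∈ B
    · simp [hx, hTx]
    · simpa [hx, hTx] using hdA x hxA hx hTx

end Colouring

section FirstChange

variable {β : Type*} {s : ℕ → β}

noncomputable def firstChange (s : ℕ → β) : ℕ := sInf {k | s k ≠ s 0}

noncomputable def changeColour (s : ℕ → β) : β × Bool := (s 0, (firstChange s).bodd)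

theorem firstChange_eq_succ (h : ∃ k, s k ≠ s 0) (h₁ : s 1 = s 0) :
    firstChange s = firstChange (seqShift s) + 1 := by
  have hpos : 1 ≤ firstChange s := Nat.one_le_iff_ne_zero.2 fun h₀ =>
    (Nat.sInf_eq_zero.1 h₀).elim (fun h => h rfl) fun he => nonempty_iff_ne_empty.1 h he
  rw [firstChange, ← Nat.sInf_add hpos]
  simp [firstChange, seqShift, h₁]

theorem changeColour_ne_seqShift (h : ∃ k, s k ≠ s 0) :
    changeColour s ≠ changeColour (seqShift s) := by
  by_cases h₁ : s 1 = s 0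
  · simp [changeColour, firstChange_eq_succ h h₁]
  · exact fun he => h₁ (congrArg Prod.fst he).symm

theorem measurable_changeColour [MeasurableSpace β] [MeasurableEq β] :
    Measurable (changeColour : (ℕ → β) → β × Bool) := by
  have : Measurable (firstChange : (ℕ → β) → ℕ) :=
    measurable_nat_sInf fun k => ((measurable_pi_apply k).eq (measurable_pi_apply 0)).not
  exact (measurable_pi_apply 0).prodMk ((measurable_from_nat (f := Nat.bodd)).comp this)

end FirstChange

section Sequences

variable {Q : Type*} {r Φ : Q → Q → Prop} {X : ℕ → Q}

theorem mapsTo_seqShift_vecSet (r : Q → Q → Prop) : MapsTo seqShift (vecSet r) (vecSet r) :=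
  fun _ hX k => hX (k + 1)

def edgeType (Φ : Q → Q → Prop) (X : ℕ → Q) (k : ℕ) : Prop := Φ (X k) (X (k + 1))

theorem exists_edgeType_ne (hX : X ∈ vecSet r) (h₁ : X ∉ vecSet fun p q => r p q ∨ Φ p q)
    (h₂ : X ∉ vecSet fun p q => r p q ∨ ¬ Φ p q) : ∃ k, edgeType Φ X k ≠ edgeType Φ X 0 := by
  simp only [vecSet, mem_ofPred_eq, not_forall, not_not] at h₁ h₂
  obtain ⟨k, hk⟩ := h₁
  obtain ⟨l, hl⟩ := h₂
  by_cases h₀ : edgeType Φ X 0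
  · exact ⟨l, fun h => (hl.resolve_left (hX l)) (h.mpr h₀)⟩
  · exact ⟨k, fun h => h₀ (h.mp (hk.resolve_left (hX k)))⟩

variable [MeasurableSpace Q] [MeasurableSingletonClass Q] [Countable Q]

theorem measurable_edge (P : Q → Q → Prop) (k : ℕ) :
    Measurable fun X : ℕ → Q => P (X k) (X (k + 1)) :=
  (measurable_of_countable fun p : Q × Q => P p.1 p.2).comp
    (f := fun X : ℕ → Q => (X k, X (k + 1)))
    ((measurable_pi_apply k).prodMk (measurable_pi_apply _))

theorem measurableSet_vecSet (r : Q → Q → Prop) : MeasurableSet (vecSet r) :=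
  measurableSet_setOfPred.2 <| Measurable.forall fun k => (measurable_edge r k).not

theorem measurable_edgeType (Φ : Q → Q → Prop) :
    Measurable (edgeType Φ : (ℕ → Q) → ℕ → Prop) :=
  measurable_pi_lambda _ (measurable_edge Φ)

end Sequences

theorem IsThin.of_or_of_or_not {Q : Type*} [Countable Q] {r Φ : Q → Q → Prop}
    (h₁ : IsThin fun p q => r p q ∨ Φ p q) (h₂ : IsThin fun p q => r p q ∨ ¬ Φ p q) :
    IsThin r := by
  let : MeasurableSpace Q := ⊤
  have : MeasurableSingletonClass Q := ⟨fun _ => trivial⟩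
  obtain ⟨c₁, hc₁, hc₁A⟩ := h₁
  obtain ⟨c₂, hc₂, hc₂A⟩ := h₂
  obtain ⟨e₂, he₂, he₂A⟩ := exists_measurable_sum_of_mapsTo
    (A := vecSet r ∩ (vecSet fun p q => r p q ∨ Φ p q)ᶜ) (measurableSet_vecSet _)
    (mapsTo_seqShift_vecSet _) hc₂ (fun X hX => hc₂A X hX _)
    (measurable_changeColour.comp (measurable_edgeType Φ))
    fun X hX hX₂ _ => changeColour_ne_seqShift (exists_edgeType_ne hX.1 hX.2 hX₂)
  obtain ⟨e₁, he₁, he₁A⟩ := exists_measurable_sum_of_mapsTo (A := vecSet r)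
    (measurableSet_vecSet _) (mapsTo_seqShift_vecSet _) hc₁ (fun X hX => hc₁A X hX _) he₂
    fun X hX hX₁ _ => he₂A X ⟨hX, hX₁⟩
  obtain ⟨d, hd, hdA⟩ := exists_measurable_fin_three_of_finite measurable_seqShift he₁ he₁A
  exact ⟨fun X => d X, hd.comp measurable_subtype_coe, fun X hX _ => hdA X hX⟩

theorem thick_or_compl_general {Q : Type*} [Countable Q]
    (r : Q → Q → Prop)
    (hthick : ¬ IsThin r) (Φ : Q → Q → Prop) :
    ¬ IsThin (fun p q => r p q ∨ Φ p q) ∨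
    ¬ IsThin (fun p q => r p q ∨ ¬ Φ p q) :=
  not_and_or.mp fun h => hthick (IsThin.of_or_of_or_not h.1 h.2)

/-- If `Q` is thick, then for every binary relation `Φ` on `Q`, at least one of
`(≤ ∪ Φ)` and `(≤ ∪ ¬Φ)` is thick. -/
theorem thick_or_compl {Q : Type*} [Countable Q]
    (r : Q → Q → Prop) (hr : Reflexive r) (ht : Transitive r)
    (hthick : ¬ IsThin r) (Φ : Q → Q → Prop) :
    ¬ IsThin (fun p q => r p q ∨ Φ p q) ∨
    ¬ IsThin (fun p q => r p q ∨ ¬ Φ p q) :=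
  thick_or_compl_general r hthick Φ
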